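/- arXiv:1404.2673 — 6 statements merged into one kernel-verified Lean document; each statement's English description precedes it below -/
import Mathlib

section
/- Let n ≥ 2 be an integer, R > 0, and let F : ℝⁿ → ℝ be symmetric and twice continuously differentiable near the point κ_R ∈ ℝⁿ whose first n−1 coordinates equal 1/R and whose last coordinate is 0. Let c, e, q ∈ ℝ and define φ : ℝ → ℝ by φ(s) = F(y(s)), where y(s) ∈ ℝⁿ has its first n−1 coordinates equal to 1/((R+sc)·√(1+(se)²)) and its last coordinate equal to −sq/(1+(se)²)^{3/2}. Then φ''(0) = (n−1)·(∂²F/∂x₁²(κ_R) + (n−2)·∂²F/∂x₁∂x₂(κ_R))·c²/R⁴ + 2(n−1)·∂²F/∂x₁∂xₙ(κ_R)·cq/R² + ∂²F/∂xₙ²(κ_R)·q² + (n−1)·∂F/∂x₁(κ_R)·(2c²/R³ − e²/R). -/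
/-!
Write `y(s) = a(s) • χ + b(s) • eₙ`, where `χ` is the sum of the first `n − 1` basis vectors.
The second-order chain rule gives `φ''(0) = D²F(κ_R)(y'(0), y'(0)) + DF(κ_R) y''(0)`, with
`y'(0) = −(c/R²) χ − q eₙ` and `y''(0) = (2c²/R³ − e²/R) χ`. A transposition of two of the first
`n − 1` coordinates fixes `κ_R` and leaves `F` invariant, hence also `DF(κ_R)` and `D²F(κ_R)`;
so the diagonal, the off-diagonal and the mixed (with `eₙ`) entries among these coordinates are
constant, and expanding in `χ` produces the coefficients `n − 1` and `(n − 1)(n − 2)`.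
-/
open Real Filter Topology

section SecondDeriv

variable {E G : Type*} [NormedAddCommGroup E] [NormedSpace ℝ E]
  [NormedAddCommGroup G] [NormedSpace ℝ G]

def HasSecondDerivAt (f : ℝ → E) (f' f'' : E) (x : ℝ) : Prop :=
  ∃ g : ℝ → E, (∀ᶠ s in 𝓝 x, HasDerivAt f (g s) s) ∧ g x = f' ∧ HasDerivAt g f'' x

variable {f : ℝ → E} {f' f'' : E} {x : ℝ}

theorem HasSecondDerivAt.hasDerivAt (h : HasSecondDerivAt f f' f'' x) : HasDerivAt f f' x := by
  obtain ⟨g, hg, rfl, -⟩ := h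
  exact hg.self_of_nhds

theorem HasSecondDerivAt.iteratedDeriv_two (h : HasSecondDerivAt f f' f'' x) :
    iteratedDeriv 2 f x = f'' := by
  obtain ⟨g, hg, -, hg'⟩ := h
  have hderiv : deriv f =ᶠ[𝓝 x] g := hg.mono fun s hs => hs.deriv
  rw [iteratedDeriv_succ, iteratedDeriv_one, hderiv.deriv_eq, hg'.deriv]

theorem HasSecondDerivAt.add {k : ℝ → E} {k' k'' : E} (hf : HasSecondDerivAt f f' f'' x)
    (hk : HasSecondDerivAt k k' k'' x) :
    HasSecondDerivAt (fun s => f s + k s) (f' + k') (f'' + k'') x := by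
  obtain ⟨g, hg, rfl, hg'⟩ := hf
  obtain ⟨l, hl, rfl, hl'⟩ := hk
  exact ⟨fun s => g s + l s, (hg.and hl).mono fun s h => h.1.add h.2, rfl, hg'.add hl'⟩

theorem HasSecondDerivAt.smul_const {a : ℝ → ℝ} {a' a'' : ℝ} (ha : HasSecondDerivAt a a' a'' x)
    (v : E) : HasSecondDerivAt (fun s => a s • v) (a' • v) (a'' • v) x := by
  obtain ⟨g, hg, rfl, hg'⟩ := ha
  exact ⟨fun s => g s • v, hg.mono fun s h => h.smul_const v, rfl, hg'.smul_const v⟩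

theorem HasSecondDerivAt.const_add (hf : HasSecondDerivAt f f' f'' x) (c : E) :
    HasSecondDerivAt (fun s => c + f s) f' f'' x := by
  obtain ⟨g, hg, rfl, hg'⟩ := hf
  exact ⟨g, hg.mono fun s h => h.const_add c, rfl, hg'⟩

theorem HasSecondDerivAt.neg (hf : HasSecondDerivAt f f' f'' x) :
    HasSecondDerivAt (fun s => -f s) (-f') (-f'') x := by
  obtain ⟨g, hg, rfl, hg'⟩ := hf
  exact ⟨fun s => -g s, hg.mono fun s h => h.neg, rfl, hg'.neg⟩

theorem hasSecondDerivAt_mul_const (c x : ℝ) : HasSecondDerivAt (fun s => s * c) c 0 x :=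
  ⟨fun _ => c, .of_forall fun _ => hasDerivAt_mul_const c, rfl, hasDerivAt_const x c⟩

theorem HasSecondDerivAt.mul {a b : ℝ → ℝ} {a' a'' b' b'' : ℝ} (ha : HasSecondDerivAt a a' a'' x)
    (hb : HasSecondDerivAt b b' b'' x) :
    HasSecondDerivAt (fun s => a s * b s) (a' * b x + a x * b')
      (a'' * b x + 2 * a' * b' + a x * b'') x := by
  have ha₁ := ha.hasDerivAt
  have hb₁ := hb.hasDerivAt
  obtain ⟨g, hg, rfl, hg'⟩ := ha
  obtain ⟨l, hl, rfl, hl'⟩ := hb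
  refine ⟨fun s => g s * b s + a s * l s, (hg.and hl).mono fun s h => h.1.mul h.2, rfl, ?_⟩
  exact ((hg'.mul hb₁).add (ha₁.mul hl')).congr_deriv (by ring)

theorem HasSecondDerivAt.inv {a : ℝ → ℝ} {a' a'' : ℝ} (ha : HasSecondDerivAt a a' a'' x)
    (hx : a x ≠ 0) :
    HasSecondDerivAt (fun s => (a s)⁻¹) (-a' / a x ^ 2)
      ((2 * a' ^ 2 - a x * a'') / a x ^ 3) x := by
  have ha₁ := ha.hasDerivAt
  obtain ⟨g, hg, rfl, hg'⟩ := ha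
  have hne : ∀ᶠ s in 𝓝 x, a s ≠ 0 := ha₁.continuousAt.eventually_ne hx
  refine ⟨fun s => -g s / a s ^ 2, (hg.and hne).mono fun s h => h.1.inv h.2, rfl, ?_⟩
  refine (hg'.neg.div (ha₁.pow 2) (pow_ne_zero 2 hx)).congr_deriv ?_
  simp only [Pi.neg_apply, Pi.pow_apply]
  field_simp
  ring

theorem HasSecondDerivAt.rpow_const {a : ℝ → ℝ} {a' a'' : ℝ} (ha : HasSecondDerivAt a a' a'' x)
    (hx : 0 < a x) (p : ℝ) :
    HasSecondDerivAt (fun s => a s ^ p) (a' * p * a x ^ (p - 1))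
      (a'' * p * a x ^ (p - 1) + a' ^ 2 * p * (p - 1) * a x ^ (p - 1 - 1)) x := by
  have ha₁ := ha.hasDerivAt
  obtain ⟨g, hg, rfl, hg'⟩ := ha
  have hpos : ∀ᶠ s in 𝓝 x, 0 < a s := ha₁.continuousAt.eventually (lt_mem_nhds hx)
  refine ⟨fun s => g s * p * a s ^ (p - 1),
    (hg.and hpos).mono fun s h => h.1.rpow_const (Or.inl h.2.ne'), rfl, ?_⟩
  exact ((hg'.mul_const p).mul (ha₁.rpow_const (Or.inl hx.ne') (p := p - 1))).congr_deriv
    (by ring)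

theorem ContDiffAt.comp_hasSecondDerivAt {F : E → G} {y : ℝ → E} {y' y'' : E}
    (hF : ContDiffAt ℝ 2 F (y x)) (hy : HasSecondDerivAt y y' y'' x) :
    HasSecondDerivAt (fun s => F (y s)) (fderiv ℝ F (y x) y')
      (fderiv ℝ (fderiv ℝ F) (y x) y' y' + fderiv ℝ F (y x) y'') x := by
  have hy₁ := hy.hasDerivAt
  obtain ⟨g, hg, rfl, hg'⟩ := hy
  have hFd : ∀ᶠ z in 𝓝 (y x), DifferentiableAt ℝ F z :=
    (hF.eventually (by simp)).mono fun z hz => hz.differentiableAt two_ne_zero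
  have hF₂ : DifferentiableAt ℝ (fderiv ℝ F) (y x) :=
    (hF.fderiv_right (m := 1) (by norm_num)).differentiableAt one_ne_zero
  refine ⟨fun s => fderiv ℝ F (y s) (g s), ?_, rfl, ?_⟩
  · filter_upwards [hg, hy₁.continuousAt.eventually hFd] with s h₁ h₂
    exact h₂.hasFDerivAt.comp_hasDerivAt s h₁
  · exact (hF₂.hasFDerivAt.comp_hasDerivAt x hy₁).clm_apply hg'

end SecondDeriv

theorem hasSecondDerivAt_one_add_sq_rpow (e p : ℝ) :
    HasSecondDerivAt (fun s => (1 + (s * e) ^ 2) ^ p) 0 (2 * p * e ^ 2) 0 := by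
  have hse := hasSecondDerivAt_mul_const e 0
  have hu := ((hse.mul hse).const_add 1).rpow_const (by norm_num) p
  simp only [← sq] at hu
  convert hu using 1 <;> simp
  ring

theorem hasSecondDerivAt_one_div_mul_sqrt {R : ℝ} (hR : R ≠ 0) (c e : ℝ) :
    HasSecondDerivAt (fun s => 1 / ((R + s * c) * √(1 + (s * e) ^ 2)))
      (-(c / R ^ 2)) (2 * c ^ 2 / R ^ 3 - e ^ 2 / R) 0 := by
  have h := (((hasSecondDerivAt_mul_const c 0).const_add R).mul
    (hasSecondDerivAt_one_add_sq_rpow e 2⁻¹)).inv (by simp [hR])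
  simp only [sqrt_eq_rpow, one_div]
  convert h using 1 <;> simp <;> field_simp

theorem hasSecondDerivAt_neg_mul_div_rpow (q e : ℝ) :
    HasSecondDerivAt (fun s => -(s * q) / (1 + (s * e) ^ 2) ^ ((3 : ℝ) / 2)) (-q) 0 0 := by
  have h := (hasSecondDerivAt_mul_const q 0).neg.mul
    ((hasSecondDerivAt_one_add_sq_rpow e (3 / 2)).inv (by simp))
  convert h using 1
  · ext s
    ring
  all_goals simp

section Invariance

variable {E G : Type*} [NormedAddCommGroup E] [NormedSpace ℝ E]
  [NormedAddCommGroup G] [NormedSpace ℝ G] {F : E → G} (T : E ≃L[ℝ] E)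

theorem fderiv_eq_comp_of_comp_eq (hF : F ∘ T = F) (x : E) :
    fderiv ℝ F x = (fderiv ℝ F (T x)).comp (T : E →L[ℝ] E) := by
  conv_lhs => rw [← hF]
  exact T.comp_right_fderiv

theorem fderiv_apply_map_of_comp_eq (hF : F ∘ T = F) {x : E} (hx : T x = x) (v : E) :
    fderiv ℝ F x (T v) = fderiv ℝ F x v := by
  conv_rhs => rw [fderiv_eq_comp_of_comp_eq T hF x, hx]
  rfl

theorem fderiv_fderiv_apply_map_of_comp_eq (hF : F ∘ T = F) {x : E} (hx : T x = x)
    (hd : DifferentiableAt ℝ (fderiv ℝ F) x) (u v : E) :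
    fderiv ℝ (fderiv ℝ F) x (T u) (T v) = fderiv ℝ (fderiv ℝ F) x u v := by
  have hd' : HasFDerivAt (fderiv ℝ F) (fderiv ℝ (fderiv ℝ F) x) (T x) := by
    rw [hx]
    exact hd.hasFDerivAt
  have h := ((ContinuousLinearMap.compL ℝ E E G).flip T).hasFDerivAt.comp x
    (hd'.comp x T.hasFDerivAt)
  have hfun : (fun z => (fderiv ℝ F (T z)).comp (T : E →L[ℝ] E)) = fderiv ℝ F :=
    funext fun z => (fderiv_eq_comp_of_comp_eq T hF z).symm
  change HasFDerivAt (fun z => (fderiv ℝ F (T z)).comp (T : E →L[ℝ] E)) _ x at h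
  rw [hfun] at h
  conv_rhs => rw [h.fderiv]
  rfl

theorem fderiv_apply_eq_fderiv_fderiv {x : E} (hd : DifferentiableAt ℝ (fderiv ℝ F) x) (u v : E) :
    fderiv ℝ (fun z => fderiv ℝ F z v) x u = fderiv ℝ (fderiv ℝ F) x u v := by
  rw [fderiv_clm_apply hd (differentiableAt_const v)]
  simp

end Invariance

theorem Function.comp_swap_eq_self {α β : Type*} [DecidableEq α] {f : α → β} {i j : α}
    (h : f i = f j) : f ∘ Equiv.swap i j = f := by
  rw [Equiv.comp_swap_eq_update]
  simp [h]

section SwapInvariant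

open Finset

variable {α M : Type*} [DecidableEq α] {s : Finset α} {f : α → α → M}

theorem apply_eq_of_swap_invariant
    (hf : ∀ i ∈ s, ∀ j ∈ s, ∀ a b, f (Equiv.swap i j a) (Equiv.swap i j b) = f a b)
    {a b i j : α} (ha : a ∈ s) (hb : b ∈ s) (hab : a ≠ b) (hi : i ∈ s) (hj : j ∈ s)
    (hij : i ≠ j) : f i j = f a b := by
  have hk : Equiv.swap i a j ∈ s := by
    rw [Equiv.swap_apply_def]
    split_ifs <;> assumption
  set k := Equiv.swap i a j
  have hka : a ≠ k := by
    rw [← Equiv.swap_apply_left i a]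
    exact (Equiv.swap i a).injective.ne hij
  calc f i j = f a k := by rw [← hf i hi a ha i j, Equiv.swap_apply_left]
    _ = f a b := by
      rw [← hf k hk b hb a k, Equiv.swap_apply_of_ne_of_ne hka hab, Equiv.swap_apply_left]

theorem sum_sum_eq_of_swap_invariant [AddCommMonoid M]
    (hf : ∀ i ∈ s, ∀ j ∈ s, ∀ a b, f (Equiv.swap i j a) (Equiv.swap i j b) = f a b)
    {a b : α} (ha : a ∈ s) (hab : a ≠ b) (hb : b ∈ s ∨ s = {a}) :
    ∑ i ∈ s, ∑ j ∈ s, f i j = #s • (f a a + (#s - 1) • f a b) := by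
  obtain hb | rfl := hb
  swap
  · simp
  refine sum_eq_card_nsmul fun i hi => ?_
  have hdiag : f i i = f a a := by rw [← hf i hi a ha i i, Equiv.swap_apply_left]
  have hoff : ∀ j ∈ s.erase i, f i j = f a b := fun j hj =>
    apply_eq_of_swap_invariant hf ha hb hab hi (mem_of_mem_erase hj) (ne_of_mem_erase hj).symm
  rw [← add_sum_erase s _ hi, hdiag, sum_eq_card_nsmul hoff, card_erase_of_mem hi]

end SwapInvariant

section Symmetric

open Finset

variable {ι : Type*} [Fintype ι] [DecidableEq ι] {F : (ι → ℝ) → ℝ}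
  (hF : ∀ σ : Equiv.Perm ι, ∀ x, F (x ∘ σ) = F x) {κ : ι → ℝ}
include hF

theorem fderiv_single_perm {σ : Equiv.Perm ι} (hσ : κ ∘ σ = κ) (a : ι) :
    fderiv ℝ F κ (Pi.single (σ a) 1) = fderiv ℝ F κ (Pi.single a 1) := by
  have h := fderiv_apply_map_of_comp_eq (LinearEquiv.funCongrLeft ℝ ℝ σ).toContinuousLinearEquiv
    (funext (hF σ)) hσ (Pi.single (σ a) 1)
  change fderiv ℝ F κ (Pi.single (σ a) 1 ∘ σ) = _ at h
  rwa [Pi.single_comp_equiv, Equiv.symm_apply_apply, eq_comm] at h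

theorem fderiv_fderiv_single_perm {σ : Equiv.Perm ι} (hσ : κ ∘ σ = κ)
    (hd : DifferentiableAt ℝ (fderiv ℝ F) κ) (a b : ι) :
    fderiv ℝ (fderiv ℝ F) κ (Pi.single (σ a) 1) (Pi.single (σ b) 1)
      = fderiv ℝ (fderiv ℝ F) κ (Pi.single a 1) (Pi.single b 1) := by
  have h := fderiv_fderiv_apply_map_of_comp_eq
    (LinearEquiv.funCongrLeft ℝ ℝ σ).toContinuousLinearEquiv (funext (hF σ)) hσ hd
    (Pi.single (σ a) 1) (Pi.single (σ b) 1)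
  change fderiv ℝ (fderiv ℝ F) κ (Pi.single (σ a) 1 ∘ σ) (Pi.single (σ b) 1 ∘ σ) = _ at h
  rwa [Pi.single_comp_equiv, Pi.single_comp_equiv, Equiv.symm_apply_apply,
    Equiv.symm_apply_apply, eq_comm] at h

variable {S : Finset ι} (hκ : ∀ i ∈ S, ∀ j ∈ S, κ i = κ j)
include hκ

theorem fderiv_sum_single_of_symmetric {a : ι} (ha : a ∈ S) :
    fderiv ℝ F κ (∑ i ∈ S, Pi.single i 1) = #S • fderiv ℝ F κ (Pi.single a 1) := by
  rw [map_sum]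
  refine sum_eq_card_nsmul fun i hi => ?_
  rw [← fderiv_single_perm hF (Function.comp_swap_eq_self (hκ i hi a ha)) i,
    Equiv.swap_apply_left]

theorem fderiv_fderiv_sum_single_single_of_symmetric (hd : DifferentiableAt ℝ (fderiv ℝ F) κ)
    {a c : ι} (ha : a ∈ S) (hc : c ∉ S) :
    fderiv ℝ (fderiv ℝ F) κ (∑ i ∈ S, Pi.single i 1) (Pi.single c 1)
      = #S • fderiv ℝ (fderiv ℝ F) κ (Pi.single a 1) (Pi.single c 1) := by
  rw [map_sum, _root_.sum_apply]
  refine sum_eq_card_nsmul fun i hi => ?_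
  rw [← fderiv_fderiv_single_perm hF (Function.comp_swap_eq_self (hκ i hi a ha)) hd i c,
    Equiv.swap_apply_left, Equiv.swap_apply_of_ne_of_ne (ne_of_mem_of_not_mem hi hc).symm
      (ne_of_mem_of_not_mem ha hc).symm]

theorem fderiv_fderiv_sum_single_sum_single_of_symmetric
    (hd : DifferentiableAt ℝ (fderiv ℝ F) κ) {a b : ι} (ha : a ∈ S) (hab : a ≠ b)
    (hb : b ∈ S ∨ S = {a}) :
    fderiv ℝ (fderiv ℝ F) κ (∑ i ∈ S, Pi.single i 1) (∑ i ∈ S, Pi.single i 1)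
      = #S • (fderiv ℝ (fderiv ℝ F) κ (Pi.single a 1) (Pi.single a 1)
        + (#S - 1) • fderiv ℝ (fderiv ℝ F) κ (Pi.single a 1) (Pi.single b 1)) := by
  simp only [map_sum, _root_.sum_apply]
  rw [sum_comm]
  exact sum_sum_eq_of_swap_invariant
    (f := fun a b => fderiv ℝ (fderiv ℝ F) κ (Pi.single a 1) (Pi.single b 1)) (fun i hi j hj a b =>
    fderiv_fderiv_single_perm hF (Function.comp_swap_eq_self (hκ i hi j hj)) hd a b) ha hab hb

omit hκ in
theorem iteratedDeriv_two_comp_of_symmetric (hC : ContDiffAt ℝ 2 F κ) {a b c : ι} (ha : a ∈ S)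
    (hab : a ≠ b) (hb : b ∈ S ∨ S = {a}) (hc : c ∉ S) {u v : ℝ → ℝ} {u' u'' v' v'' x : ℝ}
    (hu : HasSecondDerivAt u u' u'' x) (hv : HasSecondDerivAt v v' v'' x)
    (hκ : u x • ∑ i ∈ S, Pi.single i 1 + v x • Pi.single c 1 = κ) :
    iteratedDeriv 2 (fun s => F (u s • ∑ i ∈ S, Pi.single i 1 + v s • Pi.single c 1)) x
      = #S * (fderiv ℝ (fderiv ℝ F) κ (Pi.single a 1) (Pi.single a 1)
          + (#S - 1) * fderiv ℝ (fderiv ℝ F) κ (Pi.single a 1) (Pi.single b 1)) * u' ^ 2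
        + 2 * #S * fderiv ℝ (fderiv ℝ F) κ (Pi.single a 1) (Pi.single c 1) * u' * v'
        + fderiv ℝ (fderiv ℝ F) κ (Pi.single c 1) (Pi.single c 1) * v' ^ 2
        + #S * fderiv ℝ F κ (Pi.single a 1) * u'' + fderiv ℝ F κ (Pi.single c 1) * v'' := by
  have hκS : ∀ i ∈ S, ∀ j ∈ S, κ i = κ j := by
    have hκu : ∀ i ∈ S, κ i = u x := fun i hi => by
      simp [← hκ, Finset.sum_apply, Pi.single_apply, hi, ne_of_mem_of_not_mem hi hc]
    intro i hi j hj
    rw [hκu i hi, hκu j hj]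
  have hd : DifferentiableAt ℝ (fderiv ℝ F) κ :=
    (hC.fderiv_right (m := 1) (by norm_num)).differentiableAt one_ne_zero
  have hsymm := hC.isSymmSndFDerivAt (by simp [minSmoothness_of_isRCLikeNormedField])
  have hjet := (hκ ▸ hC).comp_hasSecondDerivAt ((hu.smul_const _).add (hv.smul_const _))
  rw [hjet.iteratedDeriv_two, hκ]
  simp only [map_add, map_smul, add_apply, smul_apply, smul_eq_mul, hsymm (Pi.single c 1),
    fderiv_sum_single_of_symmetric hF hκS ha,
    fderiv_fderiv_sum_single_single_of_symmetric hF hκS hd ha hc,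
    fderiv_fderiv_sum_single_sum_single_of_symmetric hF hκS hd ha hab hb, nsmul_eq_mul]
  rw [Nat.cast_sub (card_pos.2 ⟨a, ha⟩)]
  push_cast
  ring

end Symmetric

/-- Second variation of the speed `F(κ_u)` at a cylinder of radius `R > 0`:
for symmetric `F`, twice continuously differentiable near `κ_R = (1/R, …, 1/R, 0)`,
and the curve `y(s)` with first `n−1` coordinates `1/((R+sc)√(1+(se)²))` and last
coordinate `−sq/(1+(se)²)^{3/2}`, the function `φ(s) = F(y(s))` satisfies
`φ''(0) = (n−1)(∂²F/∂x₁² + (n−2)∂²F/∂x₁∂x₂)(κ_R) c²/R⁴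
          + 2(n−1)∂²F/∂x₁∂xₙ(κ_R) cq/R² + ∂²F/∂xₙ²(κ_R) q²
          + (n−1)∂F/∂x₁(κ_R)(2c²/R³ − e²/R)`. -/
theorem stmt_10 (n : ℕ) (hn : 2 ≤ n) (R : ℝ) (hR : 0 < R) (F : (Fin n → ℝ) → ℝ)
    (hsym : ∀ σ : Equiv.Perm (Fin n), ∀ x : Fin n → ℝ, F (x ∘ σ) = F x)
    (κR : Fin n → ℝ)
    (hκR : ∀ i : Fin n, κR i = if (i : ℕ) < n - 1 then 1 / R else 0)
    (hF : ContDiffAt ℝ 2 F κR)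
    (c e q : ℝ) (y : ℝ → Fin n → ℝ)
    (hy : ∀ s : ℝ, ∀ i : Fin n, y s i =
      if (i : ℕ) < n - 1 then 1 / ((R + s * c) * Real.sqrt (1 + (s * e) ^ 2))
      else -(s * q) / (1 + (s * e) ^ 2) ^ ((3 : ℝ) / 2)) :
    iteratedDeriv 2 (fun s : ℝ => F (y s)) 0
      = ((n : ℝ) - 1) *
          (fderiv ℝ (fun x => fderiv ℝ F x (Pi.single (⟨0, by omega⟩ : Fin n) 1)) κR
              (Pi.single (⟨0, by omega⟩ : Fin n) 1)
            + ((n : ℝ) - 2) *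
              fderiv ℝ (fun x => fderiv ℝ F x (Pi.single (⟨1, by omega⟩ : Fin n) 1)) κR
                (Pi.single (⟨0, by omega⟩ : Fin n) 1)) * c ^ 2 / R ^ 4
        + 2 * ((n : ℝ) - 1) *
            fderiv ℝ (fun x => fderiv ℝ F x (Pi.single (⟨n - 1, by omega⟩ : Fin n) 1)) κR
              (Pi.single (⟨0, by omega⟩ : Fin n) 1) * c * q / R ^ 2
        + fderiv ℝ (fun x => fderiv ℝ F x (Pi.single (⟨n - 1, by omega⟩ : Fin n) 1)) κR
            (Pi.single (⟨n - 1, by omega⟩ : Fin n) 1) * q ^ 2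
        + ((n : ℝ) - 1) * fderiv ℝ F κR (Pi.single (⟨0, by omega⟩ : Fin n) 1) *
            (2 * c ^ 2 / R ^ 3 - e ^ 2 / R) := by
  set S : Finset (Fin n) := {i | (i : ℕ) < n - 1}
  set N : Fin n := ⟨n - 1, by omega⟩
  have hS : ∀ i : Fin n, i ∈ S ↔ (i : ℕ) < n - 1 := by simp [S]
  have hcard : (S.card : ℝ) = n - 1 := by
    rw [Fin.card_filter_val_lt, min_eq_right (Nat.sub_le n 1), Nat.cast_sub (by omega)]
    simp
  have hcurve : y = fun s => (1 / ((R + s * c) * √(1 + (s * e) ^ 2))) • ∑ i ∈ S, Pi.single i 1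
      + (-(s * q) / (1 + (s * e) ^ 2) ^ ((3 : ℝ) / 2)) • Pi.single N 1 := by
    ext s i
    have hiN : i = N ↔ ¬ (i : ℕ) < n - 1 := by simp [N, Fin.ext_iff]; omega
    simp only [hy, Pi.add_apply, Pi.smul_apply, Finset.sum_apply, Pi.single_apply, hiN, hS,
      Finset.sum_ite_eq, smul_eq_mul]
    split_ifs <;> ring
  have hκ : y 0 = κR := by
    ext i
    simp [hy, hκR]
  have hO : (⟨1, by omega⟩ : Fin n) ∈ S ∨ S = {⟨0, by omega⟩} := by
    rcases hn.eq_or_lt with rfl | hn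
    · right
      ext i
      simp only [hS, Finset.mem_singleton, Fin.ext_iff]
      omega
    · left
      simp [hS]
      omega
  have hd : DifferentiableAt ℝ (fderiv ℝ F) κR :=
    (hF.fderiv_right (m := 1) (by norm_num)).differentiableAt one_ne_zero
  rw [hcurve] at hκ ⊢
  rw [iteratedDeriv_two_comp_of_symmetric hsym hF (by simp [hS]; omega) (by simp [Fin.ext_iff]) hO
    (by simp [hS, N]) (hasSecondDerivAt_one_div_mul_sqrt hR.ne' c e)
    (hasSecondDerivAt_neg_mul_div_rpow q e) hκ]
  simp only [fderiv_apply_eq_fderiv_fderiv hd, hcard]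
  ring
end

section
/- Let n ≥ 2 and a be integers with 1 ≤ a ≤ n, and define q : ℝ³ → ℝ by q(x₁,x₂,x₃) = (1/a)·(C(n−1,a−1)·x₁^{n−a}·(1+x₂²)^{(2−a)/2} − C(n−1,a−2)·x₁^{n+1−a}·(1+x₂²)^{−a/2}·x₃), where the second summand is interpreted as 0 when a = 1 and C(m,k) is the binomial coefficient. Then for every three-times differentiable function u : ℝ → ℝ with u > 0 and every z ∈ ℝ, ∂q/∂x₁(u(z),u'(z),u''(z)) − (d/dz)[ z ↦ ∂q/∂x₂(u(z),u'(z),u''(z)) ] + (d²/dz²)[ z ↦ ∂q/∂x₃(u(z),u'(z),u''(z)) ] = C(n−1,a)·u(z)^{n−a−1}·(1+u'(z)²)^{−a/2} − C(n−1,a−1)·u(z)^{n−a}·u''(z)·(1+u'(z)²)^{−(a+2)/2}. -/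
/-- The `a`-th weighted-volume density
`q(x₁,x₂,x₃) = (1/a)(C(n−1,a−1) x₁^{n−a} (1+x₂²)^{(2−a)/2}
                − C(n−1,a−2) x₁^{n+1−a} (1+x₂²)^{−a/2} x₃)`,
the second summand interpreted as `0` when `a = 1`. -/
noncomputable def qdens (n a : ℕ) (x₁ x₂ x₃ : ℝ) : ℝ :=
  (1 / (a : ℝ)) *
    (((n - 1).choose (a - 1) : ℝ) * x₁ ^ (n - a) * (1 + x₂ ^ 2) ^ (((2 : ℝ) - (a : ℝ)) / 2)
      - (if a = 1 then 0
         else ((n - 1).choose (a - 2) : ℝ) * x₁ ^ (n + 1 - a) * (1 + x₂ ^ 2) ^ (-(a : ℝ) / 2) * x₃))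

/-!
Write `ρ = 1 + x₂²`. The density is affine in `x₃`: `q = A x₁ᵏ ρˢ − B x₁ᵏ⁺¹ ρˢ⁻¹ x₃` with
`k = n − a`, `s = (2 − a)/2`, and the absorption identity `C(m, j+1) (j+1) = C(m, j) (m − j)`
gives `B (k + 1) = A (1 − 2s)`. Because `q` is affine in `x₃`, along `u` the combination
`d/dz ∂₃q − ∂₂q` involves only `u` and `u'`, so `u'''` drops out; by the relation between `A` and
`B` it equals `−A uᵏ u' ρˢ⁻¹`. Differentiating once more and adding `∂₁q` leaves
`k A uᵏ⁻¹ ρˢ⁻¹ − 2(1 − s) A uᵏ u'' ρˢ⁻²`, and the absorption identity turns `k A` into `C(n−1, a)`.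
-/

theorem hasDerivAt_one_add_sq_rpow {f : ℝ → ℝ} {f' z : ℝ} (hf : HasDerivAt f f' z) (c : ℝ) :
    HasDerivAt (fun w => (1 + f w ^ 2) ^ c) (2 * c * f z * f' * (1 + f z ^ 2) ^ (c - 1)) z := by
  convert ((hf.fun_pow 2).const_add 1).rpow_const (p := c) (Or.inl (by positivity)) using 1
  push_cast
  ring

theorem HasDerivAt.deriv_sub_deriv {𝕜 F : Type*} [NontriviallyNormedField 𝕜]
    [NormedAddCommGroup F] [NormedSpace 𝕜 F] {f g h : 𝕜 → F} {h' : F} {z : 𝕜}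
    (hh : HasDerivAt h h' z) (hf : DifferentiableAt 𝕜 f z) (hg : DifferentiableAt 𝕜 g z)
    (hfg : ∀ w, f w - g w = h w) : _root_.deriv f z - _root_.deriv g z = h' := by
  rw [← deriv_sub hf hg]
  exact (hh.congr_of_eventuallyEq (.of_forall hfg)).deriv

noncomputable def eulerLagrange (q : ℝ → ℝ → ℝ → ℝ) (u : ℝ → ℝ) (z : ℝ) : ℝ :=
  deriv (fun t => q t (deriv u z) (deriv (deriv u) z)) (u z)
    - deriv (fun w => deriv (fun t => q (u w) t (deriv (deriv u) w)) (deriv u w)) z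
    + deriv (deriv (fun w => deriv (fun t => q (u w) (deriv u w) t) (deriv (deriv u) w))) z

noncomputable def axialDensity (A B : ℝ) (k : ℕ) (s x y w : ℝ) : ℝ :=
  A * x ^ k * (1 + y ^ 2) ^ s - B * x ^ (k + 1) * (1 + y ^ 2) ^ (s - 1) * w

section axialDensity

variable (A B : ℝ) (k : ℕ) (s : ℝ)

theorem hasDerivAt_axialDensity₁ (x y w : ℝ) :
    HasDerivAt (fun t => axialDensity A B k s t y w)
      (A * k * x ^ (k - 1) * (1 + y ^ 2) ^ s - B * (k + 1) * x ^ k * (1 + y ^ 2) ^ (s - 1) * w)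
      x := by
  have h := (((hasDerivAt_pow k x).const_mul A).mul_const ((1 + y ^ 2) ^ s)).sub
    ((((hasDerivAt_pow (k + 1) x).const_mul B).mul_const ((1 + y ^ 2) ^ (s - 1))).mul_const w)
  refine h.congr_deriv ?_
  push_cast
  ring

theorem hasDerivAt_axialDensity₂ (x y w : ℝ) :
    HasDerivAt (fun t => axialDensity A B k s x t w)
      (2 * s * A * x ^ k * y * (1 + y ^ 2) ^ (s - 1)
        - 2 * (s - 1) * B * x ^ (k + 1) * y * (1 + y ^ 2) ^ (s - 2) * w) y := by
  have h := ((hasDerivAt_one_add_sq_rpow (hasDerivAt_id' y) s).const_mul (A * x ^ k)).sub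
    (((hasDerivAt_one_add_sq_rpow (hasDerivAt_id' y) (s - 1)).const_mul
      (B * x ^ (k + 1))).mul_const w)
  refine h.congr_deriv ?_
  rw [show s - 1 - 1 = s - 2 by ring]
  ring

theorem hasDerivAt_axialDensity₃ (x y w : ℝ) :
    HasDerivAt (fun t => axialDensity A B k s x y t)
      (-(B * x ^ (k + 1) * (1 + y ^ 2) ^ (s - 1))) w := by
  have h := ((hasDerivAt_id' w).const_mul (B * x ^ (k + 1) * (1 + y ^ 2) ^ (s - 1))).const_sub
    (A * x ^ k * (1 + y ^ 2) ^ s)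
  exact h.congr_deriv (by ring)

end axialDensity

theorem eulerLagrange_axialDensity {A B : ℝ} {k : ℕ} {s : ℝ} (hBA : B * (k + 1) = A * (1 - 2 * s))
    {u : ℝ → ℝ} (hu1 : Differentiable ℝ u) (hu2 : Differentiable ℝ (deriv u))
    (hu3 : Differentiable ℝ (deriv (deriv u))) (z : ℝ) :
    eulerLagrange (axialDensity A B k s) u z
      = k * A * u z ^ (k - 1) * (1 + deriv u z ^ 2) ^ (s - 1)
        - 2 * (1 - s) * A * u z ^ k * deriv (deriv u) z * (1 + deriv u z ^ 2) ^ (s - 2) := by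
  have hu : ∀ w, HasDerivAt u (deriv u w) w := fun w => (hu1 w).hasDerivAt
  have hu' : ∀ w, HasDerivAt (deriv u) (deriv (deriv u) w) w := fun w => (hu2 w).hasDerivAt
  have hP₃ : ∀ w, HasDerivAt (fun w => -(B * u w ^ (k + 1) * (1 + deriv u w ^ 2) ^ (s - 1)))
      (-(B * ((k + 1) * u w ^ k * deriv u w * (1 + deriv u w ^ 2) ^ (s - 1)
        + u w ^ (k + 1) * (2 * (s - 1) * deriv u w * deriv (deriv u) w
          * (1 + deriv u w ^ 2) ^ (s - 2))))) w := by
    intro w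
    have h := ((((hu w).fun_pow (k + 1)).const_mul B).mul
      (hasDerivAt_one_add_sq_rpow (hu' w) (s - 1))).neg
    refine h.congr_deriv ?_
    rw [show s - 1 - 1 = s - 2 by ring]
    push_cast
    ring
  have hH : HasDerivAt (fun w => -(A * u w ^ k * deriv u w * (1 + deriv u w ^ 2) ^ (s - 1)))
      (-(A * (k * u z ^ (k - 1) * deriv u z ^ 2 * (1 + deriv u z ^ 2) ^ (s - 1)
        + u z ^ k * deriv (deriv u) z * (1 + deriv u z ^ 2) ^ (s - 1)
        + u z ^ k * deriv u z * (2 * (s - 1) * deriv u z * deriv (deriv u) z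
          * (1 + deriv u z ^ 2) ^ (s - 2))))) z := by
    have h := (((((hu z).fun_pow k).const_mul A).fun_mul (hu' z)).fun_mul
      (hasDerivAt_one_add_sq_rpow (hu' z) (s - 1))).neg
    refine h.congr_deriv ?_
    rw [show s - 1 - 1 = s - 2 by ring]
    ring
  unfold eulerLagrange
  simp only [fun x y w => (hasDerivAt_axialDensity₁ A B k s x y w).deriv,
    fun x y w => (hasDerivAt_axialDensity₂ A B k s x y w).deriv,
    fun x y w => (hasDerivAt_axialDensity₃ A B k s x y w).deriv]
  -- `u'''` cancels: along `u`, `d/dz ∂₃q − ∂₂q` is the function of `hH`.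
  rw [funext fun w => (hP₃ w).deriv, sub_add_eq_add_sub, add_sub_assoc,
    hH.deriv_sub_deriv ?_ ?_ ?_]
  · have hρ : 1 + deriv u z ^ 2 ≠ 0 := by positivity
    have e₁ : (1 + deriv u z ^ 2) ^ (s - 1)
        = (1 + deriv u z ^ 2) ^ (s - 2) * (1 + deriv u z ^ 2) := by
      rw [← Real.rpow_add_one hρ]
      ring_nf
    have e₀ : (1 + deriv u z ^ 2) ^ s = (1 + deriv u z ^ 2) ^ (s - 1) * (1 + deriv u z ^ 2) := by
      rw [← Real.rpow_add_one hρ]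
      ring_nf
    rw [e₀, e₁]
    linear_combination (-(u z ^ k * deriv (deriv u) z * (1 + deriv u z ^ 2) ^ (s - 2)
      * (1 + deriv u z ^ 2))) * hBA
  · fun_prop (disch := positivity)
  · fun_prop (disch := positivity)
  · intro w
    linear_combination (-(u w ^ k * deriv u w * (1 + deriv u w ^ 2) ^ (s - 1))) * hBA

theorem qdens_eq_axialDensity {n a : ℕ} (han : a ≤ n) :
    qdens n a = axialDensity (((n - 1).choose (a - 1) : ℝ) / a)
      ((if a = 1 then 0 else ((n - 1).choose (a - 2) : ℝ)) / a) (n - a) ((2 - a) / 2) := by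
  funext x y w
  rw [qdens, axialDensity, show n + 1 - a = n - a + 1 by omega,
    show (2 - a : ℝ) / 2 - 1 = -a / 2 by ring]
  split_ifs <;> ring

theorem cast_choose_pred_mul {n a : ℕ} (ha : 1 ≤ a) :
    ((n - 1).choose a : ℝ) * a = (n - a : ℕ) * (n - 1).choose (a - 1) := by
  have h := Nat.choose_succ_right_eq (n - 1) (a - 1)
  rw [show a - 1 + 1 = a by omega, show n - 1 - (a - 1) = n - a by omega, mul_comm _ (n - a)] at h
  exact_mod_cast h

theorem ite_choose_pred_mul {n a : ℕ} (ha : 1 ≤ a) (han : a ≤ n) :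
    (if a = 1 then 0 else ((n - 1).choose (a - 2) : ℝ)) * ((n - a : ℕ) + 1)
      = (n - 1).choose (a - 1) * (a - 1) := by
  split_ifs with h
  · simp [h]
  · have hc := Nat.choose_succ_right_eq (n - 1) (a - 2)
    rw [show a - 2 + 1 = a - 1 by omega, show n - 1 - (a - 2) = n - a + 1 by omega] at hc
    have hc' : ((n - 1).choose (a - 1) : ℝ) * ((a - 1 : ℕ) : ℝ)
        = (n - 1).choose (a - 2) * ((n - a : ℕ) + 1) := by
      exact_mod_cast hc
    rw [Nat.cast_sub ha, Nat.cast_one] at hc'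
    linear_combination -hc'

theorem stmt_11_general (n a : ℕ) (ha1 : 1 ≤ a) (han : a ≤ n)
    (u : ℝ → ℝ) (hu1 : Differentiable ℝ u) (hu2 : Differentiable ℝ (deriv u))
    (hu3 : Differentiable ℝ (deriv (deriv u))) (z : ℝ) :
    deriv (fun t : ℝ => qdens n a t (deriv u z) (deriv (deriv u) z)) (u z)
      - deriv (fun w : ℝ =>
          deriv (fun t : ℝ => qdens n a (u w) t (deriv (deriv u) w)) (deriv u w)) z
      + deriv (deriv (fun w : ℝ =>
          deriv (fun t : ℝ => qdens n a (u w) (deriv u w) t) (deriv (deriv u) w))) z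
    = ((n - 1).choose a : ℝ) * u z ^ (n - a - 1) * (1 + deriv u z ^ 2) ^ (-(a : ℝ) / 2)
      - ((n - 1).choose (a - 1) : ℝ) * u z ^ (n - a) * deriv (deriv u) z *
          (1 + deriv u z ^ 2) ^ (-((a : ℝ) + 2) / 2) := by
  have ha : (a : ℝ) ≠ 0 := Nat.cast_ne_zero.mpr (by omega)
  have hBA : (if a = 1 then 0 else ((n - 1).choose (a - 2) : ℝ)) / a * ((n - a : ℕ) + 1)
      = (n - 1).choose (a - 1) / a * (1 - 2 * ((2 - a) / 2)) := by
    rw [div_mul_eq_mul_div, ite_choose_pred_mul ha1 han]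
    ring
  have hk : ((n - a : ℕ) : ℝ) * ((n - 1).choose (a - 1) / a) = (n - 1).choose a := by
    rw [← mul_div_assoc, ← cast_choose_pred_mul ha1, mul_div_cancel_right₀ _ ha]
  change eulerLagrange (qdens n a) u z = _
  rw [qdens_eq_axialDensity han, eulerLagrange_axialDensity hBA hu1 hu2 hu3, hk,
    show (2 - a : ℝ) / 2 - 1 = -a / 2 by ring, show (2 - a : ℝ) / 2 - 2 = -(a + 2) / 2 by ring]
  field_simp
  ring

/-- Euler–Lagrange-type identity for the weighted-volume density: for `1 ≤ a ≤ n`,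
`n ≥ 2`, and any three-times differentiable positive `u : ℝ → ℝ`,
`∂q/∂x₁(u,u',u'') − d/dz[∂q/∂x₂(u,u',u'')] + d²/dz²[∂q/∂x₃(u,u',u'')]
  = C(n−1,a) u^{n−a−1} (1+u'²)^{−a/2} − C(n−1,a−1) u^{n−a} u'' (1+u'²)^{−(a+2)/2}`. -/
theorem stmt_11 (n a : ℕ) (hn : 2 ≤ n) (ha1 : 1 ≤ a) (han : a ≤ n)
    (u : ℝ → ℝ) (hu1 : Differentiable ℝ u) (hu2 : Differentiable ℝ (deriv u))
    (hu3 : Differentiable ℝ (deriv (deriv u))) (hupos : ∀ z : ℝ, 0 < u z) (z : ℝ) :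
    deriv (fun t : ℝ => qdens n a t (deriv u z) (deriv (deriv u) z)) (u z)
      - deriv (fun w : ℝ =>
          deriv (fun t : ℝ => qdens n a (u w) t (deriv (deriv u) w)) (deriv u w)) z
      + deriv (deriv (fun w : ℝ =>
          deriv (fun t : ℝ => qdens n a (u w) (deriv u w) t) (deriv (deriv u) w))) z
    = ((n - 1).choose a : ℝ) * u z ^ (n - a - 1) * (1 + deriv u z ^ 2) ^ (-(a : ℝ) / 2)
      - ((n - 1).choose (a - 1) : ℝ) * u z ^ (n - a) * deriv (deriv u) z *
          (1 + deriv u z ^ 2) ^ (-((a : ℝ) + 2) / 2) :=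
  stmt_11_general n a ha1 han u hu1 hu2 hu3 z
end

section
/- For integers n, b with 0 ≤ b < n and n ≥ 2, define p(n,b) = n³ − (b+10)n² + 2(5b−1)n − 2b(3b−4). Then p(n,b) > 0 if and only if one of the following holds: (i) 0 ≤ b ≤ 3 and n ≥ 11; (ii) 4 ≤ b ≤ 5 and n ≥ 12; (iii) 6 ≤ b ≤ 8 and n ≥ b+7; (iv) b ≥ 9 and n ≥ b+6. -/
/-!
Writing `n = b + k`, the polynomial becomes
`(k - 6) b² + (2k² - 10k + 6) b + k (k² - 10k - 2)`, a quadratic in `b` whose leading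
coefficient changes sign at `k = 6`. It is negative definite for `1 ≤ k ≤ 5`, equal to
`18 b - 156` for `k = 6`, and for `k ≥ 7` all its coefficients in `b` are positive except
the constant term, which is positive once `k ≥ 11`; the remaining corner
`7 ≤ k ≤ 10`, `b ≤ 4` is checked case by case.
-/

def stabilityPoly (n b : ℤ) : ℤ :=
  n ^ 3 - (b + 10) * n ^ 2 + 2 * (5 * b - 1) * n - 2 * b * (3 * b - 4)

namespace stabilityPoly

theorem add_left (b k : ℤ) :
    stabilityPoly (b + k) b =
      (k - 6) * b ^ 2 + (2 * k ^ 2 - 10 * k + 6) * b + k * (k ^ 2 - 10 * k - 2) := by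
  unfold stabilityPoly
  ring

theorem add_left_neg {b k : ℤ} (hk₁ : 1 ≤ k) (hk₅ : k ≤ 5) : stabilityPoly (b + k) b < 0 := by
  rw [add_left]
  interval_cases k <;> nlinarith [sq_nonneg (b - 3)]

theorem add_left_six (b : ℤ) : stabilityPoly (b + 6) b = 18 * b - 156 := by
  rw [add_left]
  ring

theorem add_left_pos_of_five_le {b k : ℤ} (hb : 5 ≤ b) (hk : 7 ≤ k) :
    0 < stabilityPoly (b + k) b := by
  have hlin : 34 ≤ 2 * k ^ 2 - 10 * k + 6 := by nlinarith
  have hconst : -161 ≤ k * (k ^ 2 - 10 * k - 2) := by nlinarith [sq_nonneg (k - 7)]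
  rw [add_left]
  nlinarith [mul_le_mul_of_nonneg_right hlin (by omega : (0 : ℤ) ≤ b),
    mul_nonneg (by omega : (0 : ℤ) ≤ k - 7) (sq_nonneg b)]

theorem add_left_pos_of_eleven_le {b k : ℤ} (hb : 0 ≤ b) (hk : 11 ≤ k) :
    0 < stabilityPoly (b + k) b := by
  have hconst : 0 < k * (k ^ 2 - 10 * k - 2) := by nlinarith
  rw [add_left]
  nlinarith [mul_nonneg (by omega : (0 : ℤ) ≤ k - 6) (sq_nonneg b),
    mul_nonneg (by nlinarith : (0 : ℤ) ≤ 2 * k ^ 2 - 10 * k + 6) hb]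

end stabilityPoly

theorem stmt_15_general (n b : ℤ) (hb : 0 ≤ b) (hbn : b < n) :
    0 < n ^ 3 - (b + 10) * n ^ 2 + 2 * (5 * b - 1) * n - 2 * b * (3 * b - 4) ↔
      (b ≤ 3 ∧ 11 ≤ n) ∨ (4 ≤ b ∧ b ≤ 5 ∧ 12 ≤ n) ∨
      (6 ≤ b ∧ b ≤ 8 ∧ b + 7 ≤ n) ∨ (9 ≤ b ∧ b + 6 ≤ n) := by
  obtain ⟨k, rfl⟩ : ∃ k, n = b + k := ⟨n - b, by ring⟩
  change 0 < stabilityPoly (b + k) b ↔ _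
  rcases (by omega : k ≤ 5 ∨ k = 6 ∨ (5 ≤ b ∧ 7 ≤ k) ∨ 11 ≤ k ∨ (b ≤ 4 ∧ 7 ≤ k ∧ k ≤ 10))
    with hk | rfl | ⟨hb₅, hk⟩ | hk | ⟨hb₄, hk₇, hk₁₀⟩
  · have := stabilityPoly.add_left_neg (b := b) (by omega) hk
    omega
  · rw [stabilityPoly.add_left_six]
    omega
  · have := stabilityPoly.add_left_pos_of_five_le hb₅ hk
    omega
  · have := stabilityPoly.add_left_pos_of_eleven_le hb hk
    omega
  · interval_cases b <;> interval_cases k <;> norm_num [stabilityPoly]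

/-- Characterization of positivity of `p(n,b) = n³ − (b+10)n² + 2(5b−1)n − 2b(3b−4)`
for integers `0 ≤ b < n`, `n ≥ 2`. -/
theorem stmt_15 (n b : ℤ) (hb : 0 ≤ b) (hbn : b < n) (hn : 2 ≤ n) :
    0 < n ^ 3 - (b + 10) * n ^ 2 + 2 * (5 * b - 1) * n - 2 * b * (3 * b - 4) ↔
      (b ≤ 3 ∧ 11 ≤ n) ∨ (4 ≤ b ∧ b ≤ 5 ∧ 12 ≤ n) ∨
      (6 ≤ b ∧ b ≤ 8 ∧ b + 7 ≤ n) ∨ (9 ≤ b ∧ b + 6 ≤ n) :=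
  stmt_15_general n b hb hbn
end

section
/- For every integer b ≥ 2, the cubic polynomial x³ − (b+10)x² + 2(5b−1)x − 2b(3b−4) in the real variable x has exactly one real root, and this root is positive. -/
/-!
Write `p_B` for the cubic and `L = (2B + 18)/3`. For `B ≥ 2`, `p_B < 0` on `(-∞, L]`, while on
`[L, ∞)` the quotient `(p_B y - p_B x)/(y - x) = x² + xy + y² - (B+10)(x+y) + 10B - 2` is positive,
so `p_B` is strictly increasing there. Since `p_B (B + 11) > 0`, the intermediate value theorem
gives a root in `[L, B + 11]`, and it is the only one.
-/

def stabilityCubic (B x : ℝ) : ℝ :=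
  x ^ 3 - (B + 10) * x ^ 2 + 2 * (5 * B - 1) * x - 2 * B * (3 * B - 4)

lemma stabilityCubic_neg_of_le {B x : ℝ} (hB : 2 ≤ B) (hx : x ≤ (2 * B + 18) / 3) :
    stabilityCubic B x < 0 := by
  unfold stabilityCubic
  have hB₀ : 0 < 3 * B - 4 := by linarith
  rcases le_or_gt x 0 with hx₀ | hx₀
  · nlinarith [mul_nonneg (neg_nonneg.2 hx₀) (sq_nonneg x), mul_pos (by linarith : 0 < B) hB₀]
  · have hL : 0 ≤ (2 * B + 18) / 3 - x := by linarith
    have hB₂ : 0 ≤ B - 2 := by linarith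
    nlinarith [mul_nonneg (sq_nonneg x) hL, mul_nonneg hx₀.le hL, sq_nonneg (x - 1),
      mul_nonneg hB₂ hx₀.le, mul_nonneg hB₂ (sq_nonneg x), sq_nonneg (x - B)]

lemma stabilityCubic_sub_stabilityCubic (B x y : ℝ) :
    stabilityCubic B y - stabilityCubic B x =
      (y - x) * (x ^ 2 + x * y + y ^ 2 - (B + 10) * (x + y) + (10 * B - 2)) := by
  unfold stabilityCubic
  ring

lemma strictMonoOn_stabilityCubic {B : ℝ} (hB : 2 ≤ B) :
    StrictMonoOn (stabilityCubic B) (Set.Ici ((2 * B + 18) / 3)) := by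
  intro x (hx : _ ≤ x) y (hy : _ ≤ y) hxy
  have hquot : 0 < x ^ 2 + x * y + y ^ 2 - (B + 10) * (x + y) + (10 * B - 2) := by
    nlinarith [mul_nonneg (sub_nonneg.2 hx) (sub_nonneg.2 hy), sq_nonneg (x - y),
      sq_nonneg (x + y - (4 * B + 36) / 3)]
  have hdiff := stabilityCubic_sub_stabilityCubic B x y
  nlinarith [mul_pos (sub_pos.2 hxy) hquot]

lemma exists_stabilityCubic_eq_zero {B : ℝ} (hB : 2 ≤ B) :
    ∃ x ∈ Set.Icc ((2 * B + 18) / 3) (B + 11), stabilityCubic B x = 0 := by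
  have hcont : ContinuousOn (stabilityCubic B) (Set.Icc ((2 * B + 18) / 3) (B + 11)) := by
    unfold stabilityCubic
    fun_prop
  have hright : 0 ≤ stabilityCubic B (B + 11) := by
    unfold stabilityCubic
    nlinarith [sq_nonneg B]
  exact intermediate_value_Icc (by linarith) hcont
    ⟨(stabilityCubic_neg_of_le hB le_rfl).le, hright⟩

/-- For every integer `b ≥ 2`, the cubic `x³ − (b+10)x² + 2(5b−1)x − 2b(3b−4)`
has exactly one real root, and this root is positive. -/
theorem stmt_16 (b : ℤ) (hb : 2 ≤ b) :
    ∃ x : ℝ, 0 < x ∧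
      x ^ 3 - ((b : ℝ) + 10) * x ^ 2 + 2 * (5 * (b : ℝ) - 1) * x - 2 * (b : ℝ) * (3 * (b : ℝ) - 4) = 0 ∧
      ∀ y : ℝ,
        y ^ 3 - ((b : ℝ) + 10) * y ^ 2 + 2 * (5 * (b : ℝ) - 1) * y - 2 * (b : ℝ) * (3 * (b : ℝ) - 4) = 0 →
        y = x := by
  have hB : (2 : ℝ) ≤ b := by exact_mod_cast hb
  obtain ⟨x, ⟨hxL, -⟩, hx⟩ := exists_stabilityCubic_eq_zero hB
  refine ⟨x, by linarith, hx, fun y hy => ?_⟩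
  have hyL : (2 * (b : ℝ) + 18) / 3 ≤ y :=
    le_of_not_gt fun h => (stabilityCubic_neg_of_le hB h.le).ne hy
  exact (strictMonoOn_stabilityCubic hB).injOn hyL hxL (hy.trans hx.symm)
end

section
/- Let b be a real number with b ≥ 9 and define p(x) = x³ − (b+10)x² + 2(5b−1)x − 2b(3b−4). Then p(b+5) = −(b² − 6b + 135) < 0 and p(b+6) = 6(3b − 26) > 0. In particular, p has a root in the open interval (b+5, b+6). -/
/-- For real `b ≥ 9` and `p(x) = x³ − (b+10)x² + 2(5b−1)x − 2b(3b−4)`, one has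
`p(b+5) = −(b² − 6b + 135) < 0` and `p(b+6) = 6(3b − 26) > 0`; in particular `p`
has a root in `(b+5, b+6)`. -/
theorem stmt_17 (b : ℝ) (hb : 9 ≤ b) (p : ℝ → ℝ)
    (hp : ∀ x : ℝ, p x = x ^ 3 - (b + 10) * x ^ 2 + 2 * (5 * b - 1) * x - 2 * b * (3 * b - 4)) :
    (p (b + 5) = -(b ^ 2 - 6 * b + 135) ∧ p (b + 5) < 0) ∧
    (p (b + 6) = 6 * (3 * b - 26) ∧ 0 < p (b + 6)) ∧
    ∃ x ∈ Set.Ioo (b + 5) (b + 6), p x = 0 := by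
  have h5 : p (b + 5) = -(b ^ 2 - 6 * b + 135) := by rw [hp]; ring
  have h6 : p (b + 6) = 6 * (3 * b - 26) := by rw [hp]; ring
  have hneg : p (b + 5) < 0 := by rw [h5]; nlinarith [sq_nonneg (b - 3)]
  have hpos : 0 < p (b + 6) := by rw [h6]; linarith
  have hcont : Continuous p := by rw [funext hp]; fun_prop
  exact ⟨⟨h5, hneg⟩, ⟨h6, hpos⟩,
    intermediate_value_Ioo (by linarith) hcont.continuousOn ⟨hneg, hpos⟩⟩
end

section
/- Let b be a real number with b ≥ 2. Set D = 2b⁵ + 40b⁴ − 288b³ + 1733b² − 2540b − 36 and A = b³ + 66b² − 249b + 1090 + 9√D. Then D > 0, A > 0, and the number γ(b) = (1/3)·(b + 10 + (b² − 10b + 106)/A^{1/3} + A^{1/3}) satisfies γ(b)³ − (b+10)·γ(b)² + 2(5b−1)·γ(b) − 2b(3b−4) = 0. -/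
/-!
Writing `P = c₂² − 3c₁` and `Q = 2c₂³ − 9c₂c₁ + 27c₀`, Cardano's substitution
`x = (c₂ + P/t + t)/3` turns the cubic `x³ − c₂x² + c₁x − c₀` into
`(t⁶ − Q t³ + P³)/(27 t³)`, so `x` is a root as soon as `t³` solves the resolvent
quadratic `T² − Q T + P³ = 0`. For the stability cubic `Q = 2M` with
`M = b³ + 66b² − 249b + 1090`, and `M² − P³ = 81 D`, so `T = M + 9√D` is such a solution
once `D ≥ 0`. Both `D` and `M` are polynomials in `b − 2` with positive coefficients.
-/

theorem cubic_eval_cardano {K : Type*} [Field K] [CharZero K] {c₂ c₁ c₀ t x : K} (ht : t ≠ 0)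
    (hx : x = (c₂ + (c₂ ^ 2 - 3 * c₁) / t + t) / 3) :
    x ^ 3 - c₂ * x ^ 2 + c₁ * x - c₀ =
      ((t ^ 3) ^ 2 - (2 * c₂ ^ 3 - 9 * c₂ * c₁ + 27 * c₀) * t ^ 3 + (c₂ ^ 2 - 3 * c₁) ^ 3) /
        (27 * t ^ 3) := by
  subst hx
  field_simp
  ring

theorem cubic_eval_cardano_eq_zero {K : Type*} [Field K] [CharZero K] {c₂ c₁ c₀ t x : K}
    (ht : t ≠ 0)
    (hx : x = (c₂ + (c₂ ^ 2 - 3 * c₁) / t + t) / 3)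
    (hres : (t ^ 3) ^ 2 - (2 * c₂ ^ 3 - 9 * c₂ * c₁ + 27 * c₀) * t ^ 3
      + (c₂ ^ 2 - 3 * c₁) ^ 3 = 0) :
    x ^ 3 - c₂ * x ^ 2 + c₁ * x - c₀ = 0 := by
  rw [cubic_eval_cardano ht hx, hres, zero_div]

theorem resolvent_eq_zero_of_sq_sub_cube {K : Type*} [CommRing K] {M P D s : K}
    (hMP : M ^ 2 - P ^ 3 = 81 * D) (hs : s ^ 2 = D) :
    (M + 9 * s) ^ 2 - 2 * M * (M + 9 * s) + P ^ 3 = 0 := by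
  linear_combination 81 * hs - hMP

namespace StabilityCubic

theorem discriminant_pos {b : ℝ} (hb : 2 ≤ b) :
    0 < 2 * b ^ 5 + 40 * b ^ 4 - 288 * b ^ 3 + 1733 * b ^ 2 - 2540 * b - 36 := by
  obtain ⟨c, hc, rfl⟩ : ∃ c, 0 ≤ c ∧ b = c + 2 := ⟨b - 2, by linarith, by ring⟩
  have : 0 ≤ 2 * c ^ 5 + 60 * c ^ 4 + 352 * c ^ 3 + 1253 * c ^ 2 + 3076 * c := by positivity
  nlinarith

theorem resolventHalfCoeff_pos {b : ℝ} (hb : 2 ≤ b) :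
    0 < b ^ 3 + 66 * b ^ 2 - 249 * b + 1090 := by
  obtain ⟨c, hc, rfl⟩ : ∃ c, 0 ≤ c ∧ b = c + 2 := ⟨b - 2, by linarith, by ring⟩
  have : 0 ≤ c ^ 3 + 72 * c ^ 2 + 27 * c := by positivity
  nlinarith

theorem resolventHalfCoeff_sq_sub_cube (b : ℝ) :
    (b ^ 3 + 66 * b ^ 2 - 249 * b + 1090) ^ 2 - (b ^ 2 - 10 * b + 106) ^ 3 =
      81 * (2 * b ^ 5 + 40 * b ^ 4 - 288 * b ^ 3 + 1733 * b ^ 2 - 2540 * b - 36) := by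
  ring

end StabilityCubic

/-- Cardano-type formula for the real root of the stability cubic: for real `b ≥ 2`,
with `D = 2b⁵ + 40b⁴ − 288b³ + 1733b² − 2540b − 36` and
`A = b³ + 66b² − 249b + 1090 + 9√D`, one has `D > 0`, `A > 0`, and
`γ(b) = (1/3)(b + 10 + (b² − 10b + 106)/A^{1/3} + A^{1/3})` is a root of
`x³ − (b+10)x² + 2(5b−1)x − 2b(3b−4)`. -/
theorem stmt_18 (b : ℝ) (hb : 2 ≤ b) (D A γ : ℝ)
    (hD : D = 2 * b ^ 5 + 40 * b ^ 4 - 288 * b ^ 3 + 1733 * b ^ 2 - 2540 * b - 36)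
    (hA : A = b ^ 3 + 66 * b ^ 2 - 249 * b + 1090 + 9 * Real.sqrt D)
    (hγ : γ = (1 / 3) * (b + 10 + (b ^ 2 - 10 * b + 106) / A ^ ((1 : ℝ) / 3) + A ^ ((1 : ℝ) / 3))) :
    0 < D ∧ 0 < A ∧
      γ ^ 3 - (b + 10) * γ ^ 2 + 2 * (5 * b - 1) * γ - 2 * b * (3 * b - 4) = 0 := by
  have hD0 : 0 < D := hD ▸ StabilityCubic.discriminant_pos hb
  have hA0 : 0 < A := by
    rw [hA]
    linarith [StabilityCubic.resolventHalfCoeff_pos hb, Real.sqrt_nonneg D]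
  refine ⟨hD0, hA0, ?_⟩
  have ht3 : (A ^ ((1 : ℝ) / 3)) ^ 3 = A := by
    rw [one_div, ← Nat.cast_ofNat, Real.rpow_inv_natCast_pow hA0.le three_ne_zero]
  have hMP := StabilityCubic.resolventHalfCoeff_sq_sub_cube b
  rw [← hD] at hMP
  have hres := resolvent_eq_zero_of_sq_sub_cube hMP (Real.sq_sqrt hD0.le)
  rw [← hA, ← ht3] at hres
  exact cubic_eval_cardano_eq_zero (c₂ := b + 10) (Real.rpow_pos_of_pos hA0 _).ne'
    (by rw [hγ]; ring) (by linear_combination hres)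
end
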